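/- arXiv:2511.21859 — 6 statements merged into one kernel-verified Lean document; each statement's English description precedes it below -/
import Mathlib

section
/- Let n, f be naturals with n > f. Let Rcv : Fin n → ℕ → Set (Fin n) model message deliveries, where i ∈ Rcv i r for all i and r (self-delivery), and every process i receives messages from at least n − f processes in every round: for all i and r, the set {j | i ∈ Rcv j r} has cardinality ≥ n − f. Define Reach i r s by Reach i r r = {i} and Reach i r (s+1) = ⋃ j ∈ Reach i r s, Rcv j s, and Reach∞ i r = ⋃ s ≥ r, Reach i r s. If for some round r, |Reach∞ i r| ≥ f + 1, then Reach∞ i r = univ (all n processes). -/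
/-- `Reach Rcv i r s` : the reach of process `i` between rounds `r` and `s`. -/
def Reach {n : ℕ} (Rcv : Fin n → ℕ → Set (Fin n)) (i : Fin n) (r s : ℕ) : Set (Fin n) :=
  Nat.rec ({i} : Set (Fin n)) (fun k acc => ⋃ j ∈ acc, Rcv j (r + k)) (s - r)

/-- `ReachInf Rcv i r` : the reach of process `i` starting from round `r`. -/
def ReachInf {n : ℕ} (Rcv : Fin n → ℕ → Set (Fin n)) (i : Fin n) (r : ℕ) : Set (Fin n) :=
  ⋃ s, ⋃ (_ : r ≤ s), Reach Rcv i r s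

lemma Reach_succ {n : ℕ} (Rcv : Fin n → ℕ → Set (Fin n)) (i : Fin n) (r m : ℕ) :
    Reach Rcv i r (r + m + 1) = ⋃ j ∈ Reach Rcv i r (r + m), Rcv j (r + m) := by
  have h1 : r + m + 1 - r = (r + m - r) + 1 := by omega
  have h2 : r + m - r = m := by omega
  simp only [Reach, h1, h2]

lemma Reach_mono {n : ℕ} (Rcv : Fin n → ℕ → Set (Fin n))
    (hself : ∀ i r, i ∈ Rcv i r) (i : Fin n) (r : ℕ) :
    ∀ m m', m ≤ m' → Reach Rcv i r (r + m) ⊆ Reach Rcv i r (r + m') := by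
  intro m m' hmm
  induction m' with
  | zero => simp_all
  | succ k ih =>
    rcases Nat.lt_or_ge m (k+1) with hlt | hge
    · intro x hx
      show x ∈ Reach Rcv i r (r + k + 1)
      rw [Reach_succ]
      exact Set.mem_biUnion (ih (by omega) hx) (hself x _)
    · have : m = k + 1 := by omega
      subst this; exact fun x hx => hx

theorem reach_big_implies_univ {n f : ℕ} (hnf : f < n)
    (Rcv : Fin n → ℕ → Set (Fin n))
    (hself : ∀ i r, i ∈ Rcv i r)
    (hdeg : ∀ i r, n - f ≤ {j | i ∈ Rcv j r}.ncard)
    (i : Fin n) (r : ℕ)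
    (h : f + 1 ≤ (ReachInf Rcv i r).ncard) :
    ReachInf Rcv i r = Set.univ := by
  -- every element of ReachInf lies in some Reach (r+m)
  have hmem : ∀ x : Fin n, ∃ m, x ∈ ReachInf Rcv i r → x ∈ Reach Rcv i r (r + m) := by
    intro x
    by_cases hx : x ∈ ReachInf Rcv i r
    · simp only [ReachInf, Set.mem_iUnion] at hx
      obtain ⟨s, hs, hxs⟩ := hx
      exact ⟨s - r, fun _ => by rwa [Nat.add_sub_cancel' hs]⟩
    · exact ⟨0, fun hc => absurd hc hx⟩
  choose g hg using hmem
  set M := Finset.univ.sup g with hMdef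
  have hsub : ReachInf Rcv i r ⊆ Reach Rcv i r (r + M) := by
    intro x hx
    exact Reach_mono Rcv hself i r (g x) M (Finset.le_sup (Finset.mem_univ x)) (hg x hx)
  have hcard : f + 1 ≤ (Reach Rcv i r (r + M)).ncard :=
    le_trans h (Set.ncard_le_ncard hsub (Set.toFinite _))
  -- show every k is in ReachInf
  ext k
  simp only [Set.mem_univ, iff_true]
  set A := Reach Rcv i r (r + M)
  set B := {j | k ∈ Rcv j (r + M)}
  have hB : n - f ≤ B.ncard := hdeg k (r + M)
  have hint : (A ∩ B).Nonempty := by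
    by_contra hne
    rw [Set.not_nonempty_iff_eq_empty] at hne
    have hU : (A ∪ B).ncard = A.ncard + B.ncard :=
      Set.ncard_union_eq (Set.disjoint_iff_inter_eq_empty.mpr hne)
        (Set.toFinite _) (Set.toFinite _)
    have hle : (A ∪ B).ncard ≤ n := by
      have := Set.ncard_le_ncard (Set.subset_univ (A ∪ B)) (Set.toFinite _)
      simpa [Set.ncard_univ] using this
    omega
  obtain ⟨j, hjA, hjB⟩ := hint
  have : k ∈ Reach Rcv i r (r + M + 1) := by
    rw [Reach_succ]
    exact Set.mem_biUnion hjA hjB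
  simp only [ReachInf, Set.mem_iUnion]
  exact ⟨r + M + 1, by omega, this⟩
end

section
/- Let n, f be naturals with n > 2·f. Under the Heard-Of delivery model (Rcv : Fin n → ℕ → Set (Fin n) with i ∈ Rcv i r and |{j | i ∈ Rcv j r}| ≥ n − f for all i, r), call process i silenced if there exists a round r with |Reach∞ i r| ≤ f, where Reach is the transitive closure of deliveries as in the reach definition. Then the set of silenced processes has cardinality at most f. -/
/-- A process is silenced if its reach from some round has cardinality at most `f`. -/
def Silenced {n : ℕ} (Rcv : Fin n → ℕ → Set (Fin n)) (f : ℕ) (i : Fin n) : Prop :=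
  ∃ r, (ReachInf Rcv i r).ncard ≤ f

namespace AtMostFAux

/-- `k`-step reach, structural version. -/
def ReachK {n : ℕ} (Rcv : Fin n → ℕ → Set (Fin n)) (i : Fin n) (r : ℕ) : ℕ → Set (Fin n)
  | 0 => {i}
  | k + 1 => ⋃ j ∈ ReachK Rcv i r k, Rcv j (r + k)

lemma reach_eq {n : ℕ} (Rcv : Fin n → ℕ → Set (Fin n)) (i : Fin n) (r s : ℕ) :
    Reach Rcv i r s = ReachK Rcv i r (s - r) := by
  show Nat.rec ({i} : Set (Fin n)) (fun k acc => ⋃ j ∈ acc, Rcv j (r + k)) (s - r)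
      = ReachK Rcv i r (s - r)
  induction s - r with
  | zero => rfl
  | succ k ih => simp [ReachK, ih]

lemma mem_reachInf {n : ℕ} (Rcv : Fin n → ℕ → Set (Fin n)) {x i : Fin n} {r : ℕ} :
    x ∈ ReachInf Rcv i r ↔ ∃ k, x ∈ ReachK Rcv i r k := by
  constructor
  · rintro hx
    simp only [ReachInf, Set.mem_iUnion] at hx
    obtain ⟨s, _, hx⟩ := hx
    exact ⟨s - r, by rwa [reach_eq] at hx⟩
  · rintro ⟨k, hk⟩
    simp only [ReachInf, Set.mem_iUnion]
    refine ⟨r + k, Nat.le_add_right _ _, ?_⟩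
    rw [reach_eq, Nat.add_sub_cancel_left]
    exact hk

lemma self_mem_reachK {n : ℕ} (Rcv : Fin n → ℕ → Set (Fin n))
    (hself : ∀ i r, i ∈ Rcv i r) (i : Fin n) (r : ℕ) :
    ∀ k, i ∈ ReachK Rcv i r k := by
  intro k
  induction k with
  | zero => exact rfl
  | succ k ih =>
    simp only [ReachK, Set.mem_iUnion]
    exact ⟨i, ih, hself i (r + k)⟩

lemma reachK_chain {n : ℕ} (Rcv : Fin n → ℕ → Set (Fin n)) {i j : Fin n} {r a : ℕ}
    (hij : i ∈ ReachK Rcv j r a) :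
    ∀ k, ReachK Rcv i (r + a) k ⊆ ReachK Rcv j r (a + k) := by
  intro k
  induction k with
  | zero =>
    intro x hx
    rcases hx with rfl
    simpa using hij
  | succ k ih =>
    intro x hx
    simp only [ReachK, Set.mem_iUnion] at hx ⊢
    obtain ⟨y, hy, hxy⟩ := hx
    refine ⟨y, ih hy, ?_⟩
    convert hxy using 2
    simp only [Nat.add_eq]
    omega

lemma reachInf_chain {n : ℕ} (Rcv : Fin n → ℕ → Set (Fin n)) {i j : Fin n} {r a : ℕ}
    (hij : i ∈ ReachK Rcv j r a) :
    ReachInf Rcv i (r + a) ⊆ ReachInf Rcv j r := by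
  intro x hx
  rw [mem_reachInf] at hx ⊢
  obtain ⟨k, hk⟩ := hx
  exact ⟨a + k, reachK_chain Rcv hij k hk⟩

lemma mem_reachK_of_rcv {n : ℕ} (Rcv : Fin n → ℕ → Set (Fin n))
    (hself : ∀ i r, i ∈ Rcv i r) {i j : Fin n} {rj r : ℕ} (hr : rj ≤ r)
    (hij : i ∈ Rcv j r) : i ∈ ReachK Rcv j rj (r - rj + 1) := by
  simp only [ReachK, Set.mem_iUnion]
  refine ⟨j, self_mem_reachK Rcv hself j rj _, ?_⟩
  rwa [Nat.add_sub_cancel' hr]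

lemma silenced_of_rcv {n f : ℕ} (Rcv : Fin n → ℕ → Set (Fin n))
    (hself : ∀ i r, i ∈ Rcv i r) {i j : Fin n} {rj r : ℕ}
    (hsil : (ReachInf Rcv j rj).ncard ≤ f) (hr : rj ≤ r) (hij : i ∈ Rcv j r) :
    Silenced Rcv f i := by
  refine ⟨rj + (r - rj + 1), le_trans (Set.ncard_le_ncard ?_ (Set.toFinite _)) hsil⟩
  exact reachInf_chain Rcv (mem_reachK_of_rcv Rcv hself hr hij)

lemma rcv_subset_reachInf {n : ℕ} (Rcv : Fin n → ℕ → Set (Fin n))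
    (hself : ∀ i r, i ∈ Rcv i r) {j : Fin n} {rj r : ℕ} (hr : rj ≤ r) :
    Rcv j r ⊆ ReachInf Rcv j rj := by
  intro x hx
  rw [mem_reachInf]
  exact ⟨r - rj + 1, mem_reachK_of_rcv Rcv hself hr hx⟩

end AtMostFAux

open AtMostFAux in
theorem at_most_f_silenced {n f : ℕ} (h2f : 2 * f < n)
    (Rcv : Fin n → ℕ → Set (Fin n))
    (hself : ∀ i r, i ∈ Rcv i r)
    (hdeg : ∀ i r, n - f ≤ {j | i ∈ Rcv j r}.ncard) :
    {i | Silenced Rcv f i}.ncard ≤ f := by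
  classical
  by_contra hcon
  push_neg at hcon
  -- Step 1: every process is silenced.
  have hall : ∀ i, Silenced Rcv f i := by
    have hg : ∀ j : Fin n, ∃ r, Silenced Rcv f j → (ReachInf Rcv j r).ncard ≤ f := by
      intro j
      by_cases h : Silenced Rcv f j
      · obtain ⟨r, hr⟩ := h; exact ⟨r, fun _ => hr⟩
      · exact ⟨0, fun h' => absurd h' h⟩
    choose g hgspec using hg
    set R := Finset.univ.sup g with hR
    intro i
    have hT : n - f ≤ {j | i ∈ Rcv j R}.ncard := hdeg i R
    have hex : ∃ j, Silenced Rcv f j ∧ i ∈ Rcv j R := by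
      by_contra hno
      push_neg at hno
      have hsub : {j | i ∈ Rcv j R} ⊆ {i | Silenced Rcv f i}ᶜ :=
        fun j hj hjS => hno j hjS hj
      have h1 : {j | i ∈ Rcv j R}.ncard ≤ ({i | Silenced Rcv f i}ᶜ).ncard :=
        Set.ncard_le_ncard hsub (Set.toFinite _)
      have h2 : {i | Silenced Rcv f i}.ncard + ({i | Silenced Rcv f i}ᶜ).ncard = n := by
        rw [Set.ncard_add_ncard_compl]
        simp
      omega
    obtain ⟨j, hjS, hij⟩ := hex
    exact silenced_of_rcv Rcv hself (hgspec j hjS) (Finset.le_sup (Finset.mem_univ j)) hij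
  -- Step 2: counting contradiction.
  choose g hg using hall
  set R := Finset.univ.sup g with hR
  have hrow : ∀ i : Fin n, (Rcv i R).ncard ≤ f := fun i =>
    le_trans
      (Set.ncard_le_ncard (rcv_subset_reachInf Rcv hself (Finset.le_sup (Finset.mem_univ i)))
        (Set.toFinite _)) (hg i)
  have key : ∀ s : Set (Fin n), s.ncard = (Finset.univ.filter (· ∈ s)).card := by
    intro s
    rw [← Nat.card_coe_set_eq, Nat.card_eq_fintype_card, Fintype.card_subtype]
  have hsum : ∑ i : Fin n, {j | i ∈ Rcv j R}.ncard = ∑ j : Fin n, (Rcv j R).ncard := by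
    simp only [key, Finset.card_filter]
    rw [Finset.sum_comm]
    simp
  have h1 : n * (n - f) ≤ ∑ i : Fin n, {j | i ∈ Rcv j R}.ncard := by
    calc n * (n - f) = ∑ _i : Fin n, (n - f) := by
          simp [Finset.sum_const, Finset.card_univ, Nat.mul_comm]
      _ ≤ ∑ i : Fin n, {j | i ∈ Rcv j R}.ncard := Finset.sum_le_sum fun i _ => hdeg i R
  have h2 : ∑ j : Fin n, (Rcv j R).ncard ≤ n * f := by
    calc ∑ j : Fin n, (Rcv j R).ncard ≤ ∑ _j : Fin n, f := Finset.sum_le_sum fun j _ => hrow j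
      _ = n * f := by simp [Finset.sum_const, Finset.card_univ, Nat.mul_comm]
  have hmul : n * (n - f) ≤ n * f := by omega
  have := Nat.le_of_mul_le_mul_left hmul (by omega : 0 < n)
  omega
end

section
/- Let n, f be naturals with n > 2f and consider the Heard-Of delivery model where each process hears from at least n − f processes (including itself) each round, and call a process i silenced if there is some round r with |Reach∞ i r| ≤ f. Then at least one process is not silenced. -/
private lemma reach_step {n : ℕ} (Rcv : Fin n → ℕ → Set (Fin n)) (i : Fin n) {rr s : ℕ}
    (hs : rr ≤ s) {j : Fin n} (hj : j ∈ Reach Rcv i rr s) :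
    Rcv j s ⊆ Reach Rcv i rr (s + 1) := by
  intro k hk
  have h1 : s + 1 - rr = (s - rr) + 1 := by omega
  have h2 : rr + (s - rr) = s := by omega
  show k ∈ Reach Rcv i rr (s + 1)
  unfold Reach
  rw [h1]
  exact Set.mem_biUnion (show j ∈ _ from hj) (show k ∈ Rcv j (rr + (s - rr)) by rw [h2]; exact hk)

private lemma self_mem_reach {n : ℕ} (Rcv : Fin n → ℕ → Set (Fin n))
    (hself : ∀ i r, i ∈ Rcv i r) (j : Fin n) (rr : ℕ) :
    ∀ s, rr ≤ s → j ∈ Reach Rcv j rr s := by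
  intro s hs
  induction s, hs using Nat.le_induction with
  | base =>
    show j ∈ Reach Rcv j rr rr
    unfold Reach
    simp
  | succ s hs ih => exact reach_step Rcv j hs ih (hself j s)

theorem exists_not_silenced {n f : ℕ} (hnf : f < n) (h2f : 2 * f < n)
    (Rcv : Fin n → ℕ → Set (Fin n))
    (hself : ∀ i r, i ∈ Rcv i r)
    (hdeg : ∀ i r, n - f ≤ {j | i ∈ Rcv j r}.ncard) :
    ∃ i : Fin n, ¬ Silenced Rcv f i := by
  classical
  by_contra h
  push_neg at h
  choose r hr using h
  set R := Finset.univ.sup r with hR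
  have hrR : ∀ j, r j ≤ R := fun j => Finset.le_sup (Finset.mem_univ j)
  have key : ∀ i j : Fin n, i ∈ Rcv j R → i ∈ ReachInf Rcv j (r j) := by
    intro i j hij
    have hj : j ∈ Reach Rcv j (r j) R := self_mem_reach Rcv hself j (r j) R (hrR j)
    have hi : i ∈ Reach Rcv j (r j) (R + 1) := reach_step Rcv j (hrR j) hj hij
    exact Set.mem_iUnion.2 ⟨R + 1, Set.mem_iUnion.2 ⟨le_trans (hrR j) (Nat.le_succ R), hi⟩⟩
  -- counting
  have hcard1 : ∀ i : Fin n,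
      n - f ≤ (Finset.univ.filter (fun j => i ∈ Rcv j R)).card := by
    intro i
    have := hdeg i R
    rwa [Set.ncard_eq_toFinset_card', Set.toFinset_setOf] at this
  have hcard2 : ∀ j : Fin n,
      (Finset.univ.filter (fun i => i ∈ ReachInf Rcv j (r j))).card ≤ f := by
    intro j
    have := hr j
    rwa [show ReachInf Rcv j (r j) = {i | i ∈ ReachInf Rcv j (r j)} from rfl,
      Set.ncard_eq_toFinset_card', Set.toFinset_setOf] at this
  have hsum : n * (n - f) ≤ n * f := by
    calc n * (n - f) = ∑ _i : Fin n, (n - f) := by simp [mul_comm]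
    _ ≤ ∑ i : Fin n, (Finset.univ.filter (fun j => i ∈ Rcv j R)).card :=
        Finset.sum_le_sum fun i _ => hcard1 i
    _ ≤ ∑ i : Fin n, (Finset.univ.filter (fun j => i ∈ ReachInf Rcv j (r j))).card := by
        refine Finset.sum_le_sum fun i _ => Finset.card_le_card ?_
        intro j hj
        simp only [Finset.mem_filter, Finset.mem_univ, true_and] at hj ⊢
        exact key i j hj
    _ = ∑ j : Fin n, (Finset.univ.filter (fun i => i ∈ ReachInf Rcv j (r j))).card := by
        simp only [Finset.card_filter]
        exact Finset.sum_comm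
    _ ≤ ∑ _j : Fin n, f := Finset.sum_le_sum fun j _ => hcard2 j
    _ = n * f := by simp [mul_comm]
  have hn : 0 < n := lt_of_le_of_lt (Nat.zero_le f) hnf
  have := Nat.le_of_mul_le_mul_left hsum hn
  omega
end

section
/- In the Heard-Of model with n > 2 processes and at most f = 1 omission per process per round (each process may miss at most one message per round), if process i is silenced from round R (no other process ever hears from i directly or transitively after round R), then for every round r ≥ R + 1, the round-r view of process i contains the round-(r−2) views of all n processes. -/
/-- `ReachV Rcv j t s` : the set of processes whose round-`s` view contains the
round-`t` view of process `j`; a message delivered in round `u + 1` carries the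
sender's round-`u` view.  `ReachV j t t = {j}` and
`ReachV j t (s+1) = ⋃ p ∈ ReachV j t s, Rcv p (s+1)`. -/
def ReachV {n : ℕ} (Rcv : Fin n → ℕ → Set (Fin n)) (j : Fin n) (t s : ℕ) : Set (Fin n) :=
  Nat.rec ({j} : Set (Fin n)) (fun k acc => ⋃ p ∈ acc, Rcv p (t + k + 1)) (s - t)

/-- Lemma 7 (silenced_node_hears_from_all) for `f = 1`:
if process `i` is silenced from round `R` (no other process hears from it in any
round `r ≥ R`), each process hears from at least `n - 1` processes (including
itself) each round, and `n > 2`, then for every round `r ≥ R + 1` the round-`r`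
view of `i` contains the round-`(r-2)` views of all processes. -/
theorem silenced_node_hears_from_all {n : ℕ} (hn : 2 < n)
    (Rcv : Fin n → ℕ → Set (Fin n))
    (hself : ∀ p r, p ∈ Rcv p r)
    (hdeg : ∀ p r, n - 1 ≤ {q | p ∈ Rcv q r}.ncard)
    (i : Fin n) (R : ℕ) (hR : 1 ≤ R)
    (hsil : ∀ r, R ≤ r → Rcv i r ⊆ {i}) :
    ∀ r, R + 1 ≤ r → ∀ j : Fin n, i ∈ ReachV Rcv j (r - 2) r := by
  intro r hr j
  have h2 : r - (r - 2) = 2 := by omega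
  have e1 : r - 2 + 0 + 1 = r - 1 := by omega
  have e2 : r - 2 + 1 + 1 = r := by omega
  have hRV : ReachV Rcv j (r - 2) r = ⋃ p ∈ Rcv j (r - 1), Rcv p r := by
    unfold ReachV
    rw [h2]
    show (⋃ p ∈ ⋃ q ∈ ({j} : Set (Fin n)), Rcv q (r - 2 + 0 + 1), Rcv p (r - 2 + 1 + 1)) = _
    rw [e1]
    simp [show r - 1 + 1 = r from by omega]
  rw [hRV]
  by_cases hij : j = i
  · subst hij
    exact Set.mem_biUnion (hself j (r - 1)) (hself j r)
  · -- find p ≠ i with i ∈ Rcv p r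
    have hT : 1 < {q | i ∈ Rcv q r}.ncard := by
      have := hdeg i r
      omega
    obtain ⟨a, ha, b, hb, hab⟩ :=
      (Set.one_lt_ncard (Set.toFinite _)).mp hT
    have hp : ∃ p, p ≠ i ∧ i ∈ Rcv p r := by
      by_cases hai : a = i
      · exact ⟨b, by rintro rfl; exact hab hai, hb⟩
      · exact ⟨a, hai, ha⟩
    obtain ⟨p, hpi, hpr⟩ := hp
    -- p ∉ Rcv i (r-1)
    have hR1 : R ≤ r - 1 := by omega
    have hpni : p ∉ Rcv i (r - 1) := fun h => hpi (hsil (r - 1) hR1 h)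
    -- j ∈ {q | p ∈ Rcv q (r-1)}
    have hj : p ∈ Rcv j (r - 1) := by
      by_contra hjn
      have h2c : 1 < ({q | p ∈ Rcv q (r - 1)}ᶜ).ncard :=
        (Set.one_lt_ncard (Set.toFinite _)).mpr ⟨i, hpni, j, hjn, fun h => hij h.symm⟩
      have hsum : {q | p ∈ Rcv q (r - 1)}.ncard + ({q | p ∈ Rcv q (r - 1)}ᶜ).ncard = n := by
        rw [Set.ncard_add_ncard_compl]
        simp
      have := hdeg p (r - 1)
      omega
    exact Set.mem_biUnion hj hpr
end

section
/- Let N ≥ 1 be an integer and let 0 < c < 1/N. Then there exists an integer L = L(N, c) such that for every collection X₁, …, X_L of L pairwise independent random variables taking values in a finite set {a₁, …, a_N}, there exist distinct indices a, b ∈ {1, …, L} with ℙ(X_a = X_b) ≥ c. -/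
open MeasureTheory

/-- Probabilistic pigeonhole principle: for `N ≥ 1` and `0 < c < 1/N` there is an
`L = L(N, c)` such that among any `L` pairwise independent random variables with
values in a set of `N` elements, two of them collide with probability at least `c`. -/
theorem randomized_pigeonhole (N : ℕ) (hN : 1 ≤ N) (c : ℝ) (hc : 0 < c)
    (hcN : c < 1 / N) :
    ∃ L : ℕ, ∀ (Ω : Type) [MeasurableSpace Ω] (μ : Measure Ω),
      IsProbabilityMeasure μ →
      ∀ X : Fin L → Ω → Fin N, (∀ a, Measurable (X a)) →
      (Pairwise fun a b => ProbabilityTheory.IndepFun (X a) (X b) μ) →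
      ∃ a b : Fin L, a ≠ b ∧ ENNReal.ofReal c ≤ μ {ω | X a ω = X b ω} := by
  have hN0 : (0:ℝ) < N := by exact_mod_cast hN
  have hden : 0 < 1 - N * c := by
    have h1 : N * c < N * (1 / N) := by exact mul_lt_mul_of_pos_left hcN hN0
    rw [mul_one_div, div_self hN0.ne'] at h1
    linarith
  refine ⟨⌈(N:ℝ) * (1 - c) / (1 - N * c)⌉₊ + 1, ?_⟩
  set L : ℕ := ⌈(N:ℝ) * (1 - c) / (1 - N * c)⌉₊ + 1 with hLdef
  intro Ω _ μ hμ X hX hindep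
  by_contra hcon
  push_neg at hcon
  -- p a k : probability X a = k
  set p : Fin L → Fin N → ℝ := fun a k => (μ (X a ⁻¹' {k})).toReal with hp
  have hfin : ∀ (s : Set Ω), μ s ≠ ⊤ := fun s => (measure_lt_top μ s).ne
  have hp0 : ∀ a k, 0 ≤ p a k := fun a k => ENNReal.toReal_nonneg
  have hp1 : ∀ a k, p a k ≤ 1 := by
    intro a k
    have := prob_le_one (μ := μ) (s := X a ⁻¹' {k})
    simpa [hp] using ENNReal.toReal_le_of_le_ofReal zero_le_one (by simpa using this)
  have hpsum : ∀ a, ∑ k, p a k = 1 := by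
    intro a
    have h1 : ∑ k : Fin N, μ (X a ⁻¹' {k}) = μ (X a ⁻¹' (Finset.univ : Finset (Fin N))) :=
      sum_measure_preimage_singleton _ (fun y _ => hX a (measurableSet_singleton y))
    simp only [Finset.coe_univ, Set.preimage_univ, measure_univ] at h1
    have := ENNReal.toReal_sum (s := (Finset.univ : Finset (Fin N)))
      (f := fun k => μ (X a ⁻¹' {k})) (fun k _ => hfin _)
    rw [h1] at this
    simpa [hp] using this.symm
  -- collision probability as a sum
  have hcoll : ∀ a b : Fin L, a ≠ b →
      (μ {ω | X a ω = X b ω}).toReal = ∑ k, p a k * p b k := by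
    intro a b hab
    have hset : {ω | X a ω = X b ω} = ⋃ k ∈ (Finset.univ : Finset (Fin N)),
        (X a ⁻¹' {k} ∩ X b ⁻¹' {k}) := by
      ext ω
      simp only [Set.mem_setOf_eq, Finset.mem_univ, Set.iUnion_true, Set.mem_iUnion,
        Set.mem_inter_iff, Set.mem_preimage, Set.mem_singleton_iff]
      exact ⟨fun h => ⟨X b ω, h, rfl⟩, fun ⟨k, h1, h2⟩ => h1.trans h2.symm⟩
    have hdisj : Set.PairwiseDisjoint (↑(Finset.univ : Finset (Fin N)))
        (fun k => X a ⁻¹' {k} ∩ X b ⁻¹' {k}) := by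
      intro i _ j _ hij
      refine Set.disjoint_left.mpr ?_
      rintro ω ⟨h1, _⟩ ⟨h3, _⟩
      exact hij (h1.symm.trans h3)
    have hmeas : ∀ k ∈ (Finset.univ : Finset (Fin N)),
        MeasurableSet (X a ⁻¹' {k} ∩ X b ⁻¹' {k}) :=
      fun k _ => (hX a (measurableSet_singleton k)).inter (hX b (measurableSet_singleton k))
    rw [hset, measure_biUnion_finset hdisj hmeas]
    rw [ENNReal.toReal_sum (fun k _ => hfin _)]
    refine Finset.sum_congr rfl fun k _ => ?_
    rw [(hindep hab).measure_inter_preimage_eq_mul _ _ (measurableSet_singleton k)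
      (measurableSet_singleton k), ENNReal.toReal_mul]
  -- all collisions < c
  have hlt : ∀ a b : Fin L, a ≠ b → ∑ k, p a k * p b k < c := by
    intro a b hab
    rw [← hcoll a b hab]
    have := hcon a b hab
    exact (ENNReal.lt_ofReal_iff_toReal_lt (hfin _)).mp this
  -- Cauchy-Schwarz
  set S : Fin N → ℝ := fun k => ∑ a, p a k with hS
  have hSsum : ∑ k, S k = L := by
    rw [Finset.sum_comm]
    simp [hpsum, Finset.sum_congr rfl fun a _ => hpsum a]
  have hCS : ((L:ℝ))^2 ≤ N * ∑ k, (S k)^2 := by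
    have := sq_sum_le_card_mul_sum_sq (s := (Finset.univ : Finset (Fin N))) (f := S)
    rw [hSsum] at this
    simpa using this
  -- expand the sum of squares
  have hexpand : ∑ k, (S k)^2 = ∑ a : Fin L, ∑ b : Fin L, ∑ k, p a k * p b k := by
    have h1 : ∀ k, (S k)^2 = ∑ a : Fin L, ∑ b : Fin L, p a k * p b k := by
      intro k
      rw [hS, sq, Finset.sum_mul_sum]
    rw [Finset.sum_congr rfl fun k _ => h1 k, Finset.sum_comm]
    exact Finset.sum_congr rfl fun a _ => Finset.sum_comm
  have hbound : ∑ k, (S k)^2 ≤ L + L * (L - 1) * c := by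
    rw [hexpand]
    have hdiag : ∀ a : Fin L, ∑ k, p a k * p a k ≤ 1 := by
      intro a
      calc ∑ k, p a k * p a k ≤ ∑ k, p a k :=
            Finset.sum_le_sum fun k _ =>
              mul_le_of_le_one_right (hp0 a k) (hp1 a k)
        _ = 1 := hpsum a
    have hsplit : ∀ a : Fin L, ∑ b : Fin L, ∑ k, p a k * p b k ≤ 1 + (L - 1) * c := by
      intro a
      rw [← Finset.add_sum_erase _ _ (Finset.mem_univ a)]
      have hoff : ∑ b ∈ Finset.univ.erase a, ∑ k, p a k * p b k ≤ (L - 1) * c := by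
        calc ∑ b ∈ Finset.univ.erase a, ∑ k, p a k * p b k
            ≤ ∑ _b ∈ Finset.univ.erase a, c :=
              Finset.sum_le_sum fun b hb =>
                (hlt a b (Finset.ne_of_mem_erase hb).symm).le
          _ = (L - 1) * c := by
              have hL1' : 1 ≤ L := by rw [hLdef]; omega
              rw [Finset.sum_const, Finset.card_erase_of_mem (Finset.mem_univ a),
                Finset.card_univ, Fintype.card_fin, nsmul_eq_mul,
                Nat.cast_sub hL1', Nat.cast_one]
      exact add_le_add (hdiag a) hoff
    calc ∑ a : Fin L, ∑ b : Fin L, ∑ k, p a k * p b k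
        ≤ ∑ _a : Fin L, (1 + (L - 1) * c) := Finset.sum_le_sum fun a _ => hsplit a
      _ = L + L * (L - 1) * c := by
          rw [Finset.sum_const, Finset.card_univ, Fintype.card_fin, nsmul_eq_mul]; ring
  have hLlarge : (N:ℝ) * (1 - c) / (1 - N * c) < L := by
    have h1 : (N:ℝ) * (1 - c) / (1 - N * c) ≤ ⌈(N:ℝ) * (1 - c) / (1 - N * c)⌉₊ :=
      Nat.le_ceil _
    have h2 : ((⌈(N:ℝ) * (1 - c) / (1 - N * c)⌉₊ : ℝ)) < L := by
      rw [hLdef]; push_cast; linarith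
    linarith
  have hL1 : (1:ℝ) ≤ L := by
    have : 1 ≤ L := Nat.le_add_left 1 _
    exact_mod_cast this
  nlinarith [hCS, hbound, hLlarge, mul_pos hden (lt_of_lt_of_le one_pos hL1),
    mul_lt_mul_of_pos_right ((div_lt_iff₀ hden).mp hLlarge) (lt_of_lt_of_le one_pos hL1)]
end

section
/- Let N ≥ 1 and 0 < c < 1/N. Any set of vectors in the standard simplex Δ^{N−1} ⊆ ℝ^N whose pairwise dot products are all < c has cardinality at most (1 + 2√N / √(2(1/N − c)))^{N−1} — in particular it is finite, with an explicit bound depending only on N and c. -/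
/-!
Subtracting the barycentre maps the simplex into the unit ball of the hyperplane
`(ℝ ∙ (1, …, 1))ᗮ`, of dimension `N - 1`, without changing distances. By Cauchy–Schwarz
`‖x‖² ≥ 1/N` on the simplex, so `‖x - y‖² = ‖x‖² + ‖y‖² - 2⟪x, y⟫ ≥ 2 (1/N - c) = d²` for distinct
points of the set. The balls of radius `d / 2` around them are then disjoint and lie in the ball
of radius `√N + d / 2`, and comparing Haar volumes bounds their number by `(1 + 2√N/d) ^ (N - 1)`.
-/

open MeasureTheory Metric Module

theorem Finset.card_le_of_norm_le_of_le_dist {E : Type*} [NormedAddCommGroup E]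
    [NormedSpace ℝ E] [FiniteDimensional ℝ E] {R d : ℝ} (hR : 0 ≤ R) (hd : 0 < d)
    (F : Finset E) (hF : ∀ x ∈ F, ‖x‖ ≤ R) (hsep : (F : Set E).Pairwise fun x y => d ≤ dist x y) :
    (F.card : ℝ) ≤ (1 + 2 * R / d) ^ finrank ℝ E := by
  have hρ : 1 ≤ 1 + 2 * R / d := le_add_of_nonneg_right (by positivity)
  rcases subsingleton_or_nontrivial E with hE | hE
  · exact le_trans (mod_cast F.card_le_one_of_subsingleton) (one_le_pow₀ hρ)
  borelize E
  set μ : Measure E := Measure.addHaar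
  have hdisj : (F : Set E).PairwiseDisjoint fun x => ball x (d / 2) := fun x hx y hy hxy =>
    ball_disjoint_ball (by linarith [hsep hx hy hxy])
  have hcover : ⋃ x ∈ F, ball x (d / 2) ⊆ ball 0 ((1 + 2 * R / d) * (d / 2)) := by
    refine Set.iUnion₂_subset fun x hx => ball_subset_ball' ?_
    rw [dist_zero_right]
    field_simp
    linarith [hF x hx]
  have hvol : (F.card : ENNReal) * μ (ball 0 (d / 2)) ≤
      ENNReal.ofReal ((1 + 2 * R / d) ^ finrank ℝ E) * μ (ball 0 (d / 2)) :=
    calc (F.card : ENNReal) * μ (ball 0 (d / 2)) = ∑ x ∈ F, μ (ball x (d / 2)) := by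
          simp [Measure.addHaar_ball_center]
      _ = μ (⋃ x ∈ F, ball x (d / 2)) :=
          (measure_biUnion_finset hdisj fun _ _ => measurableSet_ball).symm
      _ ≤ μ (ball 0 ((1 + 2 * R / d) * (d / 2))) := measure_mono hcover
      _ = _ := Measure.addHaar_ball_mul μ 0 (by linarith) _
  have hcard := (ENNReal.mul_le_mul_iff_left (measure_ball_pos μ 0 (by positivity)).ne'
    measure_ball_lt_top.ne).1 hvol
  rwa [← ENNReal.ofReal_natCast, ENNReal.ofReal_le_ofReal_iff (by positivity)] at hcard

theorem Set.finite_and_ncard_le_of_forall_finset_card_le {α : Type*} {T : Set α} {b : ℝ}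
    (h : ∀ F : Finset α, ↑F ⊆ T → (F.card : ℝ) ≤ b) : T.Finite ∧ (T.ncard : ℝ) ≤ b := by
  have hT : T.Finite := by
    by_contra hT
    obtain ⟨F, hFT, hF⟩ := Set.Infinite.exists_subset_card_eq hT (⌊b⌋₊ + 1)
    have := h F hFT
    rw [hF, Nat.cast_add_one] at this
    linarith [Nat.lt_floor_add_one b]
  exact ⟨hT, by simpa [Set.ncard_eq_toFinset_card T hT] using h hT.toFinset (by simp)⟩

theorem Submodule.finite_and_ncard_le_of_norm_le_of_le_dist {E : Type*} [NormedAddCommGroup E]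
    [NormedSpace ℝ E] [FiniteDimensional ℝ E] (W : Submodule ℝ E) {R d : ℝ} (hR : 0 ≤ R)
    (hd : 0 < d) {T : Set E} (hTW : T ⊆ W) (hT : ∀ x ∈ T, ‖x‖ ≤ R)
    (hsep : T.Pairwise fun x y => d ≤ dist x y) :
    T.Finite ∧ (T.ncard : ℝ) ≤ (1 + 2 * R / d) ^ finrank ℝ W := by
  classical
  refine Set.finite_and_ncard_le_of_forall_finset_card_le fun F hF => ?_
  have hcard : (F.subtype (· ∈ W)).card = F.card := by
    rw [Finset.card_subtype,
      Finset.filter_true_of_mem fun x hx => SetLike.mem_coe.1 (hTW (hF hx))]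
  rw [← hcard]
  refine Finset.card_le_of_norm_le_of_le_dist hR hd _ (fun x hx => ?_) fun x hx y hy hxy => ?_
  · exact hT _ (hF (Finset.mem_subtype.1 hx))
  · exact hsep (hF (Finset.mem_subtype.1 hx)) (hF (Finset.mem_subtype.1 hy))
      (Subtype.coe_ne_coe.2 hxy)

open WithLp

section
variable {ι : Type*} [Fintype ι] {x y : ι → ℝ}

theorem sum_sq_le_one_of_mem_stdSimplex (hx : x ∈ stdSimplex ℝ ι) : ∑ i, x i ^ 2 ≤ 1 :=
  calc ∑ i, x i ^ 2 ≤ ∑ i, x i := Finset.sum_le_sum fun i _ => by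
        nlinarith [hx.1 i, (mem_Icc_of_mem_stdSimplex hx i).2]
    _ = 1 := hx.2

theorem inv_card_le_sum_sq_of_sum_eq_one (hx : ∑ i, x i = 1) :
    (Fintype.card ι : ℝ)⁻¹ ≤ ∑ i, x i ^ 2 := by
  have hpos : (0 : ℝ) < Fintype.card ι := by
    exact_mod_cast Finset.card_pos.2 (Finset.nonempty_of_sum_ne_zero (hx ▸ one_ne_zero))
  have h := sq_sum_le_card_mul_sum_sq (s := Finset.univ) (f := x)
  rw [hx, Finset.card_univ, one_pow] at h
  exact (inv_le_iff_one_le_mul₀' hpos).2 h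

theorem two_mul_inv_card_sub_sum_mul_le_dist_sq (hx : ∑ i, x i = 1) (hy : ∑ i, y i = 1) :
    2 * ((Fintype.card ι : ℝ)⁻¹ - ∑ i, x i * y i) ≤ dist (toLp 2 x) (toLp 2 y) ^ 2 := by
  have hexp :
      dist (toLp 2 x) (toLp 2 y) ^ 2 = ∑ i, x i ^ 2 + ∑ i, y i ^ 2 - 2 * ∑ i, x i * y i := by
    rw [EuclideanSpace.dist_eq, Real.sq_sqrt (by positivity), Finset.mul_sum,
      ← Finset.sum_add_distrib, ← Finset.sum_sub_distrib]
    exact Finset.sum_congr rfl fun i _ => by simp only [Real.dist_eq, sq_abs]; ring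
  rw [hexp]
  linarith [inv_card_le_sum_sq_of_sum_eq_one hx, inv_card_le_sum_sq_of_sum_eq_one hy]

noncomputable def stdSimplexBarycenter (ι : Type*) [Fintype ι] : EuclideanSpace ℝ ι :=
  toLp 2 fun _ => (Fintype.card ι : ℝ)⁻¹

theorem finrank_orthogonal_span_toLp_one [Nonempty ι] :
    finrank ℝ (ℝ ∙ toLp 2 (1 : ι → ℝ))ᗮ = Fintype.card ι - 1 := by
  have hone : toLp 2 (1 : ι → ℝ) ≠ 0 := by simp
  have h := Submodule.finrank_add_finrank_orthogonal (ℝ ∙ toLp 2 (1 : ι → ℝ))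
  rw [finrank_span_singleton hone, finrank_euclideanSpace] at h
  omega

variable [Nonempty ι]

theorem sub_stdSimplexBarycenter_mem_orthogonal (hx : ∑ i, x i = 1) :
    toLp 2 x - stdSimplexBarycenter ι ∈ (ℝ ∙ toLp 2 (1 : ι → ℝ))ᗮ := by
  rw [Submodule.mem_orthogonal_singleton_iff_inner_right, stdSimplexBarycenter, ← toLp_sub,
    EuclideanSpace.inner_toLp_toLp]
  simp [dotProduct, Finset.sum_sub_distrib, hx]

theorem norm_sub_stdSimplexBarycenter_le_one (hx : x ∈ stdSimplex ℝ ι) :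
    ‖toLp 2 x - stdSimplexBarycenter ι‖ ≤ 1 := by
  have hN : (Fintype.card ι : ℝ) ≠ 0 := by simp
  have hsq :
      ‖toLp 2 x - stdSimplexBarycenter ι‖ ^ 2 = ∑ i, x i ^ 2 - (Fintype.card ι : ℝ)⁻¹ := by
    simp only [stdSimplexBarycenter, ← toLp_sub, EuclideanSpace.norm_sq_eq, Pi.sub_apply,
      Real.norm_eq_abs, sq_abs, sub_sq, Finset.sum_add_distrib, Finset.sum_sub_distrib,
      ← Finset.sum_mul, ← Finset.mul_sum, hx.2, mul_one, inv_pow, Finset.sum_const,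
      Finset.card_univ, nsmul_eq_mul]
    field_simp
    ring
  have hle := sum_sq_le_one_of_mem_stdSimplex hx
  rw [← sq_le_one_iff₀ (norm_nonneg _), hsq]
  linarith [inv_nonneg.2 (Nat.cast_nonneg (α := ℝ) (Fintype.card ι))]

end

theorem simplex_small_dot_card_bound_general (N : ℕ) (hN : 1 ≤ N) (c : ℝ)
    (hcN : c < 1 / N) (S : Set (Fin N → ℝ))
    (hS : ∀ x ∈ S, (∀ k, 0 ≤ x k) ∧ ∑ k, x k = 1)
    (hdot : ∀ x ∈ S, ∀ y ∈ S, x ≠ y → ∑ k, x k * y k < c) :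
    S.Finite ∧
      (S.ncard : ℝ) ≤
        (1 + 2 * Real.sqrt N / Real.sqrt (2 * (1 / (N : ℝ) - c))) ^ (N - 1) := by
  have : Nonempty (Fin N) := Fin.pos_iff_nonempty.1 hN
  set f : (Fin N → ℝ) → EuclideanSpace ℝ (Fin N) :=
    fun x => toLp 2 x - stdSimplexBarycenter (Fin N)
  have hf : f.Injective := sub_left_injective.comp (toLp_injective 2)
  have hd : 0 < Real.sqrt (2 * (1 / (N : ℝ) - c)) := Real.sqrt_pos.2 (by linarith)
  have hsep : (f '' S).Pairwise fun u v => Real.sqrt (2 * (1 / (N : ℝ) - c)) ≤ dist u v := by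
    rw [hf.injOn.pairwise_image]
    intro x hx y hy hxy
    rw [Function.onFun, dist_sub_right, Real.sqrt_le_left dist_nonneg]
    have hdist := two_mul_inv_card_sub_sum_mul_le_dist_sq (hS x hx).2 (hS y hy).2
    rw [Fintype.card_fin, ← one_div] at hdist
    linarith [hdot x hx y hy hxy]
  obtain ⟨hfin, hcard⟩ :=
    (ℝ ∙ toLp 2 (1 : Fin N → ℝ))ᗮ.finite_and_ncard_le_of_norm_le_of_le_dist (Real.sqrt_nonneg N) hd
    (Set.image_subset_iff.2 fun x hx => sub_stdSimplexBarycenter_mem_orthogonal (hS x hx).2)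
    (Set.forall_mem_image.2 fun x hx => (norm_sub_stdSimplexBarycenter_le_one (hS x hx)).trans
      (Real.one_le_sqrt.2 (mod_cast hN))) hsep
  rw [finrank_orthogonal_span_toLp_one, Fintype.card_fin, Set.ncard_image_of_injective S hf]
    at hcard
  exact ⟨hfin.of_finite_image hf.injOn, hcard⟩

/-- Explicit packing-type bound: any set of vectors in the standard simplex
`Δ^{N-1} ⊆ ℝ^N` with pairwise dot products `< c < 1/N` is finite, of cardinality
at most `(1 + 2√N / √(2(1/N - c)))^(N-1)`. -/
theorem simplex_small_dot_card_bound (N : ℕ) (hN : 1 ≤ N) (c : ℝ) (hc : 0 < c)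
    (hcN : c < 1 / N) (S : Set (Fin N → ℝ))
    (hS : ∀ x ∈ S, (∀ k, 0 ≤ x k) ∧ ∑ k, x k = 1)
    (hdot : ∀ x ∈ S, ∀ y ∈ S, x ≠ y → ∑ k, x k * y k < c) :
    S.Finite ∧
      (S.ncard : ℝ) ≤
        (1 + 2 * Real.sqrt N / Real.sqrt (2 * (1 / (N : ℝ) - c))) ^ (N - 1) :=
  simplex_small_dot_card_bound_general N hN c hcN S hS hdot
end
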